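/- arXiv:1103.3795 — 2 statements merged into one kernel-verified Lean document; each statement's English description precedes it below -/
import Mathlib

section
/- Least-squares solution via l-inverses (the Example, stated for i = 2): Let A be a real p×m matrix with AᵀA invertible, B a real q×n matrix with BᵀB invertible, and Y a real p×q matrix. Define X̂ = (AᵀA)⁻¹ Aᵀ · Y · B · (BᵀB)⁻¹ (that is, X̂ = A⁻ Y (B⁻)ᵀ where A⁻ = (AᵀA)⁻¹Aᵀ and B⁻ = (BᵀB)⁻¹Bᵀ). Then for every real m×n matrix X, ∑_{i,j} ((Y − A·X̂·Bᵀ) i j)² ≤ ∑_{i,j} ((Y − A·X·Bᵀ) i j)²; i.e., X̂ minimizes the squared Frobenius norm of the residual E = Y − A X Bᵀ. -/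
/-!
`X̂` solves the normal equations `AᵀA X̂ BᵀB = AᵀYB`, i.e. the residual `E = Y − A X̂ Bᵀ` satisfies
`Aᵀ E B = 0`. Since `Z ↦ A Z Bᵀ` and `E ↦ Aᵀ E B` are adjoint for the Frobenius pairing, `E` is
orthogonal to every `A (X̂ − X) Bᵀ`, and Pythagoras gives
`‖Y − A X Bᵀ‖² = ‖E‖² + ‖A (X̂ − X) Bᵀ‖² ≥ ‖E‖²`.
-/

open Matrix

namespace Matrix

variable {R : Type*} {l m n o : Type*} [Fintype l] [Fintype m] [Fintype n] [Fintype o]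

theorem sum_sum_mul_eq_trace_transpose_mul [NonUnitalCommSemiring R] (E F : Matrix m n R) :
    ∑ i, ∑ j, E i j * F i j = trace (Eᵀ * F) := by
  rw [Finset.sum_comm]
  simp only [trace, diag, mul_apply, transpose_apply]

theorem sum_sum_mul_mul_mul_transpose [CommSemiring R] (E : Matrix m o R) (A : Matrix m n R)
    (Z : Matrix n l R) (B : Matrix o l R) :
    ∑ i, ∑ j, E i j * (A * Z * Bᵀ) i j = ∑ k, ∑ t, (Aᵀ * E * B) k t * Z k t := by
  rw [sum_sum_mul_eq_trace_transpose_mul, sum_sum_mul_eq_trace_transpose_mul,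
    ← Matrix.mul_assoc, trace_mul_comm]
  simp only [transpose_mul, transpose_transpose, Matrix.mul_assoc]

theorem sum_sum_sq_le_sum_sum_sq_add [CommRing R] [LinearOrder R] [IsStrictOrderedRing R]
    {E D : Matrix m n R} (h : ∑ i, ∑ j, E i j * D i j = 0) :
    ∑ i, ∑ j, E i j ^ 2 ≤ ∑ i, ∑ j, (E + D) i j ^ 2 := by
  have hexpand : ∑ i, ∑ j, (E + D) i j ^ 2 =
      ∑ i, ∑ j, E i j ^ 2 + 2 * ∑ i, ∑ j, E i j * D i j + ∑ i, ∑ j, D i j ^ 2 := by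
    simp only [add_apply, add_sq, Finset.sum_add_distrib, Finset.mul_sum, mul_assoc]
  have hD : 0 ≤ ∑ i, ∑ j, D i j ^ 2 := by positivity
  rw [hexpand, h]
  linarith

theorem sum_sum_sq_sub_le_of_normal_equations [CommRing R] [LinearOrder R]
    [IsStrictOrderedRing R] {A : Matrix m n R} {B : Matrix o l R} {Y : Matrix m o R}
    {Xhat : Matrix n l R} (hXhat : Aᵀ * A * Xhat * (Bᵀ * B) = Aᵀ * Y * B) (X : Matrix n l R) :
    ∑ i, ∑ j, (Y - A * Xhat * Bᵀ) i j ^ 2 ≤ ∑ i, ∑ j, (Y - A * X * Bᵀ) i j ^ 2 := by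
  have hresidual : Aᵀ * (Y - A * Xhat * Bᵀ) * B = 0 := by
    rw [Matrix.mul_sub, Matrix.sub_mul, ← hXhat]
    simp only [Matrix.mul_assoc, sub_self]
  have hsplit : Y - A * X * Bᵀ = (Y - A * Xhat * Bᵀ) + A * (Xhat - X) * Bᵀ := by
    rw [Matrix.mul_sub, Matrix.sub_mul]
    abel
  rw [hsplit]
  apply sum_sum_sq_le_sum_sum_sq_add
  simp only [sum_sum_mul_mul_mul_transpose, hresidual, zero_apply, zero_mul,
    Finset.sum_const_zero]

theorem lInverse_mul_mul_transpose_lInverse_solves_normal_equations [CommRing R] [DecidableEq n]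
    [DecidableEq l] {A : Matrix m n R} {B : Matrix o l R} (hA : IsUnit (Aᵀ * A).det)
    (hB : IsUnit (Bᵀ * B).det) (Y : Matrix m o R) :
    Aᵀ * A * ((Aᵀ * A)⁻¹ * Aᵀ * Y * B * (Bᵀ * B)⁻¹) * (Bᵀ * B) = Aᵀ * Y * B := by
  rw [Matrix.mul_assoc _ _ (Bᵀ * B), nonsing_inv_mul_cancel_right _ _ hB]
  simp only [Matrix.mul_assoc, mul_nonsing_inv_cancel_left _ _ hA]

end Matrix

/-- Least-squares solution via l-inverses (i = 2): `X̂ = A⁻ Y (B⁻)ᵀ`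
minimizes the squared Frobenius norm of the residual `Y − A X Bᵀ`. -/
theorem lInverse_least_squares
    (p m q n : ℕ)
    (A : Matrix (Fin p) (Fin m) ℝ) (B : Matrix (Fin q) (Fin n) ℝ)
    (hA : IsUnit (Aᵀ * A).det) (hB : IsUnit (Bᵀ * B).det)
    (Y : Matrix (Fin p) (Fin q) ℝ)
    (Xhat : Matrix (Fin m) (Fin n) ℝ)
    (hXhat : Xhat = (Aᵀ * A)⁻¹ * Aᵀ * Y * B * (Bᵀ * B)⁻¹)
    (X : Matrix (Fin m) (Fin n) ℝ) :
    ∑ i : Fin p, ∑ j : Fin q, ((Y - A * Xhat * Bᵀ) i j) ^ 2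
      ≤ ∑ i : Fin p, ∑ j : Fin q, ((Y - A * X * Bᵀ) i j) ^ 2 := by
  subst hXhat
  exact sum_sum_sq_sub_le_of_normal_equations
    (lInverse_mul_mul_transpose_lInverse_solves_normal_equations hA hB Y) X
end

section
/- Normalizing integral of the univariate skew normal kernel: For every real number δ, ∫_ℝ φ(z) · Φ(δ·z) dz = 1/2, where φ(z) = exp(−z²/2)/√(2π) is the standard normal density and Φ(t) = (1 + erf(t/√2))/2 is the standard normal cumulative distribution function. -/
open MeasureTheory

/-- The error function `erf t = (2/√π) ∫₀ᵗ exp(−s²) ds`. -/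
noncomputable def erf (t : ℝ) : ℝ :=
  (2 / Real.sqrt Real.pi) * ∫ s in (0 : ℝ)..t, Real.exp (-s ^ 2)

/-- The standard normal probability density function. -/
noncomputable def stdNormalPdf (z : ℝ) : ℝ :=
  Real.exp (-z ^ 2 / 2) / Real.sqrt (2 * Real.pi)

/-- The standard normal cumulative distribution function. -/
noncomputable def stdNormalCdf (t : ℝ) : ℝ :=
  (1 + erf (t / Real.sqrt 2)) / 2

/-! Since `φ` is even and `Φ (-t) = 1 - Φ t`, the substitution `z ↦ -z` turns
`I = ∫ φ(z) Φ(δz) dz` into `∫ φ(z) (1 - Φ(δz)) dz = 1 - I`, so `I = 1/2`. -/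

theorem integral_mul_eq_half_of_even_of_neg_eq_one_sub {f h : ℝ → ℝ}
    (hf_even : ∀ z, f (-z) = f z) (hh : ∀ z, h (-z) = 1 - h z)
    (hf : Integrable f) (hfh : Integrable fun z ↦ f z * h z) :
    ∫ z, f z * h z = (∫ z, f z) / 2 := by
  have hreflect : ∫ z, f z * h z = ∫ z, f z * (1 - h z) := by
    rw [← integral_neg_eq_self]
    simp only [hf_even, hh]
  have hsplit : ∫ z, f z * (1 - h z) = (∫ z, f z) - ∫ z, f z * h z := by
    simp only [mul_one_sub]
    exact integral_sub hf hfh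
  linarith

lemma erf_neg (t : ℝ) : erf (-t) = -erf t := by
  have h := intervalIntegral.integral_comp_neg (a := 0) (b := -t) fun s ↦ Real.exp (-s ^ 2)
  simp only [neg_sq, neg_neg, neg_zero] at h
  rw [erf, erf, h, intervalIntegral.integral_symm]
  ring

lemma abs_erf_le_one_of_nonneg {t : ℝ} (ht : 0 ≤ t) : |erf t| ≤ 1 := by
  have hgauss : IntegrableOn (fun s ↦ Real.exp (-s ^ 2)) (Set.Ioi 0) := by
    simpa using integrableOn_Ioi_exp_neg_mul_sq_iff.2 one_pos
  have hint_le : ∫ s in (0 : ℝ)..t, Real.exp (-s ^ 2) ≤ Real.sqrt Real.pi / 2 := by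
    rw [intervalIntegral.integral_of_le ht]
    calc ∫ s in Set.Ioc 0 t, Real.exp (-s ^ 2)
        ≤ ∫ s in Set.Ioi 0, Real.exp (-s ^ 2) :=
          setIntegral_mono_set hgauss (ae_of_all _ fun s ↦ (Real.exp_pos _).le)
            Set.Ioc_subset_Ioi_self.eventuallyLE
      _ = Real.sqrt Real.pi / 2 := by simpa using integral_gaussian_Ioi 1
  have hint_nonneg : 0 ≤ ∫ s in (0 : ℝ)..t, Real.exp (-s ^ 2) :=
    intervalIntegral.integral_nonneg ht fun s _ ↦ (Real.exp_pos _).le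
  have hpi : 0 < Real.sqrt Real.pi := Real.sqrt_pos.2 Real.pi_pos
  rw [abs_of_nonneg (by unfold erf; positivity), erf]
  calc 2 / Real.sqrt Real.pi * ∫ s in (0 : ℝ)..t, Real.exp (-s ^ 2)
      ≤ 2 / Real.sqrt Real.pi * (Real.sqrt Real.pi / 2) := by gcongr
    _ = 1 := by field_simp

lemma abs_erf_le_one (t : ℝ) : |erf t| ≤ 1 := by
  rcases le_total 0 t with ht | ht
  · exact abs_erf_le_one_of_nonneg ht
  · simpa [erf_neg] using abs_erf_le_one_of_nonneg (neg_nonneg.2 ht)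

@[fun_prop]
lemma continuous_erf : Continuous erf :=
  continuous_const.mul <| intervalIntegral.continuous_primitive
    (fun _ _ ↦ (by fun_prop : Continuous fun s : ℝ ↦ Real.exp (-s ^ 2)).intervalIntegrable _ _) 0

lemma stdNormalCdf_neg (t : ℝ) : stdNormalCdf (-t) = 1 - stdNormalCdf t := by
  rw [stdNormalCdf, stdNormalCdf, neg_div, erf_neg]
  ring

lemma abs_stdNormalCdf_le_one (t : ℝ) : |stdNormalCdf t| ≤ 1 := by
  have := abs_le.1 (abs_erf_le_one (t / Real.sqrt 2))
  rw [stdNormalCdf, abs_le]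
  constructor <;> linarith

lemma continuous_stdNormalCdf : Continuous stdNormalCdf := by
  unfold stdNormalCdf
  fun_prop

lemma stdNormalPdf_eq_gaussianPDFReal : stdNormalPdf = ProbabilityTheory.gaussianPDFReal 0 1 := by
  ext z
  simp [stdNormalPdf, ProbabilityTheory.gaussianPDFReal, div_eq_inv_mul]

lemma stdNormalPdf_neg (z : ℝ) : stdNormalPdf (-z) = stdNormalPdf z := by
  rw [stdNormalPdf, stdNormalPdf, neg_sq]

lemma integrable_stdNormalPdf : Integrable stdNormalPdf :=
  stdNormalPdf_eq_gaussianPDFReal ▸ ProbabilityTheory.integrable_gaussianPDFReal 0 1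

lemma integral_stdNormalPdf : ∫ z, stdNormalPdf z = 1 :=
  stdNormalPdf_eq_gaussianPDFReal ▸ ProbabilityTheory.integral_gaussianPDFReal_eq_one 0 one_ne_zero

lemma integrable_stdNormalPdf_mul_stdNormalCdf (δ : ℝ) :
    Integrable fun z ↦ stdNormalPdf z * stdNormalCdf (δ * z) := by
  simp only [mul_comm (stdNormalPdf _)]
  refine integrable_stdNormalPdf.bdd_mul (c := 1) ?_ (ae_of_all _ fun z ↦ abs_stdNormalCdf_le_one _)
  exact (continuous_stdNormalCdf.comp (continuous_const_mul δ)).aestronglyMeasurable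

/-- Normalizing integral of the univariate skew normal kernel:
`∫ φ(z) Φ(δz) dz = 1/2` for every real `δ`. -/
theorem integral_stdNormalPdf_mul_stdNormalCdf (δ : ℝ) :
    ∫ z : ℝ, stdNormalPdf z * stdNormalCdf (δ * z) = 1 / 2 := by
  rw [integral_mul_eq_half_of_even_of_neg_eq_one_sub stdNormalPdf_neg
    (fun z ↦ by rw [mul_neg, stdNormalCdf_neg]) integrable_stdNormalPdf
    (integrable_stdNormalPdf_mul_stdNormalCdf δ), integral_stdNormalPdf]
end
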